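/- Let ε > 0 and let {u,v} ∈ K satisfy the link condition and be (p,ε)-admissible, and let a ∈ ℝ and b = a + ε. For every p-chain c of K'_a over ℤ/2, ξ_#(ψ(c)) = c as p-chains of K'_b; that is, the composite ξ_# ∘ ψ equals the inclusion of chains of K'_a into chains of K'_b. -/

import Mathlib

open Classical Finset

noncomputable section

variable {V : Type*} [Fintype V] [DecidableEq V]

/-- `K` is a finite abstract simplicial complex on the vertex set `V`. -/
def IsComplex (K : Finset (Finset V)) : Prop :=
  (∀ σ ∈ K, σ.Nonempty) ∧ ∀ σ ∈ K, ∀ τ : Finset V, τ ⊆ σ → τ.Nonempty → τ ∈ K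

/-- `h` is a height function on `K`. -/
def IsHeight (K : Finset (Finset V)) (h : Finset V → ℝ) : Prop :=
  ∀ σ ∈ K, ∀ τ ∈ K, σ ⊆ τ → h σ ≤ h τ

/-- The sublevel complex `K_a`. -/
def sublevel (K : Finset (Finset V)) (h : Finset V → ℝ) (a : ℝ) : Finset (Finset V) :=
  K.filter fun σ => h σ ≤ a

/-- The vertex map sending `v` to `u` and fixing all other vertices. -/
def cmap (u v : V) : V → V := fun x => if x = v then u else x

/-- The contraction `ξ` on simplices. -/
def xi (u v : V) (σ : Finset V) : Finset V := σ.image (cmap u v)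

/-- The contracted complex `ξ(K)`. -/
def contract (u v : V) (K : Finset (Finset V)) : Finset (Finset V) := K.image (xi u v)

/-- The link of a simplex `σ` in `K`. -/
def lk (K : Finset (Finset V)) (σ : Finset V) : Finset (Finset V) :=
  K.filter fun τ => τ ∩ σ = ∅ ∧ τ ∪ σ ∈ K

/-- The edge `{u,v}` satisfies the link condition. -/
def LinkCond (K : Finset (Finset V)) (u v : V) : Prop :=
  lk K {u, v} = lk K {u} ∩ lk K {v}

/-- The mod-2 boundary of a chain: `∂c(τ)` is the mod-2 number of simplices of `c`
containing `τ` as a facet. -/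
def bdry (c : Finset V → ZMod 2) : Finset V → ZMod 2 := fun τ =>
  ∑ σ ∈ univ.filter (fun σ : Finset V => τ ⊆ σ ∧ σ.card = τ.card + 1), c σ

/-- `c` is a `p`-chain of the complex `L` (a `p`-simplex has `p+1` vertices). -/
def IsChainOf (L : Finset (Finset V)) (p : ℕ) (c : Finset V → ZMod 2) : Prop :=
  ∀ σ, c σ ≠ 0 → σ ∈ L ∧ σ.card = p + 1

/-- `c` is a `p`-cycle of `L`. -/
def IsCycleOf (L : Finset (Finset V)) (p : ℕ) (c : Finset V → ZMod 2) : Prop :=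
  IsChainOf L p c ∧ bdry c = 0

/-- `c` is a `p`-boundary of `L`. -/
def IsBoundaryOf (L : Finset (Finset V)) (p : ℕ) (c : Finset V → ZMod 2) : Prop :=
  ∃ Γ, IsChainOf L (p + 1) Γ ∧ bdry Γ = c

/-- The chain map `ξ_#`: a simplex `σ` is sent to `ξ(σ)` if the dimension is preserved,
and to `0` otherwise, extended linearly. -/
def xiChain (u v : V) (c : Finset V → ZMod 2) : Finset V → ZMod 2 := fun σ' =>
  ∑ σ ∈ univ.filter (fun σ : Finset V => xi u v σ = σ' ∧ σ.card = σ'.card), c σ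

/-- The mirror `m(σ)` of a simplex: exchange `u` and `v`. -/
def mir (u v : V) (σ : Finset V) : Finset V := σ.image (Equiv.swap u v)

/-- A simplex is vanishing if it contains both `u` and `v`. -/
def Vanishing (K : Finset (Finset V)) (u v : V) (σ : Finset V) : Prop :=
  σ ∈ K ∧ u ∈ σ ∧ v ∈ σ

/-- A simplex is mirrored if it contains exactly one of `u, v` and `σ ∪ {u,v} ∈ K`. -/
def Mirrored (K : Finset (Finset V)) (u v : V) (σ : Finset V) : Prop :=
  σ ∈ K ∧ ((u ∈ σ ∧ v ∉ σ) ∨ (v ∈ σ ∧ u ∉ σ)) ∧ σ ∪ {u, v} ∈ K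

/-- A simplex is local if it is vanishing or mirrored. -/
def IsLocal (K : Finset (Finset V)) (u v : V) (σ : Finset V) : Prop :=
  Vanishing K u v σ ∨ Mirrored K u v σ

/-- `prec` is a linear order on `K` refining the height function, with ties broken by
dimension (lower dimensional simplices first). -/
def PrecOK (K : Finset (Finset V)) (h : Finset V → ℝ)
    (prec : Finset V → Finset V → Prop) : Prop :=
  (∀ σ, ¬ prec σ σ) ∧
  (∀ σ τ ρ, prec σ τ → prec τ ρ → prec σ ρ) ∧
  (∀ σ ∈ K, ∀ τ ∈ K, σ ≠ τ → prec σ τ ∨ prec τ σ) ∧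
  (∀ σ ∈ K, ∀ τ ∈ K, h σ < h τ → prec σ τ) ∧
  (∀ σ ∈ K, ∀ τ ∈ K, h σ = h τ → σ.card < τ.card → prec σ τ)

/-- The `≺`-later of a mirrored simplex `σ` and its mirror `m(σ)`. -/
def later (prec : Finset V → Finset V → Prop) (u v : V) (σ : Finset V) : Finset V :=
  if prec σ (mir u v σ) then mir u v σ else σ

/-- The edge `{u,v}` is `(p,ε)`-admissible: for every mirrored `p`-simplex (and, when
`p > 0`, every mirrored `(p-1)`-simplex) `σ`, the heights of the `≺`-later of the
mirrored pair `σ, m(σ)` and of their shared vanishing cofacet `σ ∪ {u,v}` differ by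
at most `ε`. -/
def PAdmissible (K : Finset (Finset V)) (h : Finset V → ℝ) (u v : V)
    (prec : Finset V → Finset V → Prop) (p : ℕ) (ε : ℝ) : Prop :=
  (∀ σ, Mirrored K u v σ → σ.card = p + 1 →
    |h (later prec u v σ) - h (σ ∪ {u, v})| ≤ ε) ∧
  (0 < p → ∀ σ, Mirrored K u v σ → σ.card = p →
    |h (later prec u v σ) - h (σ ∪ {u, v})| ≤ ε)

/-- The value of the chain map `ψ` on a single simplex `σ'` of the contracted complex:
(i) if `σ'` is the image of a mirrored pair `τ ≺ m(τ)`, then `ψ(σ') = τ + Σ ρ`, summed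
over the vanishing simplices `ρ` of the same dimension sharing with `τ` a common
mirrored facet `η` with `m(η) ≺ η`;
(ii) otherwise, if the unique preimage `σ₀` of `σ'` has a mirrored facet `η` with
`m(η) ≺ η`, then `ψ(σ') = σ₀ + Σ (η ∪ {u,v})` over all such facets;
(iii) otherwise `ψ(σ') = σ'`. -/
def psiSimp (K : Finset (Finset V)) (u v : V) (prec : Finset V → Finset V → Prop)
    (σ' : Finset V) : Finset V → ZMod 2 :=
  if u ∈ σ' ∧ v ∉ σ' ∧ Mirrored K u v σ' then
    let τ : Finset V := if prec σ' (mir u v σ') then σ' else mir u v σ'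
    fun ρ =>
      (if ρ = τ then 1 else 0) +
      (if ρ ∈ K ∧ u ∈ ρ ∧ v ∈ ρ ∧ ρ.card = σ'.card ∧
          (∃ η : Finset V, η ⊆ τ ∧ η ⊆ ρ ∧ η.card + 1 = τ.card ∧
            Mirrored K u v η ∧ prec (mir u v η) η) then 1 else 0)
  else
    let σ₀ : Finset V := if σ' ∈ K then σ' else mir u v σ'
    if ∃ η : Finset V, η ⊆ σ₀ ∧ η.card + 1 = σ₀.card ∧ Mirrored K u v η ∧
        prec (mir u v η) η then
      fun ρ =>
        (if ρ = σ₀ then 1 else 0) +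
        ∑ η ∈ σ₀.powerset.filter (fun η => η.card + 1 = σ₀.card ∧ Mirrored K u v η ∧
            prec (mir u v η) η ∧ η ∪ {u, v} = ρ), (1 : ZMod 2)
    else fun ρ => if ρ = σ' then 1 else 0

/-- The chain map `ψ`, the linear extension of `psiSimp`. -/
def psiChain (K : Finset (Finset V)) (u v : V) (prec : Finset V → Finset V → Prop)
    (c : Finset V → ZMod 2) : Finset V → ZMod 2 :=
  fun ρ => ∑ σ' ∈ (univ : Finset (Finset V)), c σ' * psiSimp K u v prec σ' ρ

/-! `ψ(σ')` is a simplex `σ₀ ∈ {σ', m(σ')}` with `ξ(σ₀) = σ'` plus a sum of vanishing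
simplices. `ξ_#` kills vanishing simplices, since they lose the vertex `v`, and sends `σ₀`
back to `σ'`. -/

omit [Fintype V] in
theorem xi_eq_self_of_notMem (u : V) {v : V} {σ : Finset V} (hv : v ∉ σ) : xi u v σ = σ := by
  refine (Finset.image_congr fun x hx => ?_).trans Finset.image_id
  exact if_neg (ne_of_mem_of_not_mem hx hv)

omit [Fintype V] in
theorem card_mir (u v : V) (σ : Finset V) : (mir u v σ).card = σ.card :=
  Finset.card_image_of_injective _ (Equiv.injective _)

omit [Fintype V] in
theorem xi_mir_eq_self {u v : V} {σ : Finset V} (hv : v ∉ σ) :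
    xi u v (mir u v σ) = σ := by
  have hcomp : ∀ x ∈ σ, cmap u v (Equiv.swap u v x) = x := by
    intro x hx
    have hxv : x ≠ v := ne_of_mem_of_not_mem hx hv
    by_cases hxu : x = u
    · subst hxu
      simp [cmap]
    · simp [cmap, Equiv.swap_apply_of_ne_of_ne hxu hxv, hxv]
  rw [xi, mir, Finset.image_image]
  exact (Finset.image_congr fun x hx => hcomp x hx).trans Finset.image_id

omit [Fintype V] in
theorem notMem_xi {u v : V} (hne : u ≠ v) (σ : Finset V) : v ∉ xi u v σ := by
  simp only [xi, cmap, Finset.mem_image, not_exists, not_and]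
  intro x _ hx
  split_ifs at hx with hxv
  exacts [hne hx, hxv hx]

omit [Fintype V] in
theorem notMem_of_mem_contract {u v : V} (hne : u ≠ v) {L : Finset (Finset V)}
    {σ : Finset V} (hσ : σ ∈ contract u v L) : v ∉ σ := by
  obtain ⟨α, -, rfl⟩ := Finset.mem_image.1 hσ
  exact notMem_xi hne α

omit [Fintype V] in
theorem card_xi_lt {u v : V} (hne : u ≠ v) {σ : Finset V} (hu : u ∈ σ) (hv : v ∈ σ) :
    (xi u v σ).card < σ.card := by
  have hsub : xi u v σ ⊆ σ.erase v := by
    intro y hy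
    obtain ⟨x, hx, rfl⟩ := Finset.mem_image.1 hy
    by_cases hxv : x = v
    · simpa [cmap, hxv] using Finset.mem_erase.2 ⟨hne, hu⟩
    · simpa [cmap, hxv] using Finset.mem_erase.2 ⟨hxv, hx⟩
  exact (Finset.card_le_card hsub).trans_lt (Finset.card_erase_lt_of_mem hv)

omit [Fintype V] in
theorem exists_psiSimp_eq_single (K : Finset (Finset V)) (u v : V)
    (prec : Finset V → Finset V → Prop) (σ' : Finset V) :
    ∃ σ₀ ∈ ({σ', mir u v σ'} : Finset (Finset V)), ∀ ρ, ¬ (u ∈ ρ ∧ v ∈ ρ) →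
      psiSimp K u v prec σ' ρ = if ρ = σ₀ then 1 else 0 := by
  have hσ' : σ' ∈ ({σ', mir u v σ'} : Finset (Finset V)) := Finset.mem_insert_self _ _
  have hmir : mir u v σ' ∈ ({σ', mir u v σ'} : Finset (Finset V)) :=
    Finset.mem_insert_of_mem (Finset.mem_singleton_self _)
  have hnotVanishing : ∀ ρ, ¬ (u ∈ ρ ∧ v ∈ ρ) → ∀ P : Prop, ¬ (ρ ∈ K ∧ u ∈ ρ ∧ v ∈ ρ ∧ P) :=
    fun ρ hρ P h => hρ ⟨h.2.1, h.2.2.1⟩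
  have hnotCofacet : ∀ ρ, ¬ (u ∈ ρ ∧ v ∈ ρ) → ∀ η : Finset V, η ∪ {u, v} ≠ ρ := by
    rintro ρ hρ η rfl
    exact hρ ⟨by simp, by simp⟩
  unfold psiSimp
  dsimp only
  split_ifs
  · exact ⟨σ', hσ', fun ρ hρ => by simp only [if_neg (hnotVanishing ρ hρ _), add_zero]⟩
  · exact ⟨mir u v σ', hmir, fun ρ hρ => by simp only [if_neg (hnotVanishing ρ hρ _), add_zero]⟩
  · refine ⟨σ', hσ', fun ρ hρ => ?_⟩
    beta_reduce
    rw [Finset.sum_eq_zero ?_, add_zero]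
    exact fun η hη => absurd (Finset.mem_filter.1 hη).2.2.2.2 (hnotCofacet ρ hρ η)
  · exact ⟨σ', hσ', fun ρ _ => rfl⟩
  · refine ⟨mir u v σ', hmir, fun ρ hρ => ?_⟩
    beta_reduce
    rw [Finset.sum_eq_zero ?_, add_zero]
    exact fun η hη => absurd (Finset.mem_filter.1 hη).2.2.2.2 (hnotCofacet ρ hρ η)
  · exact ⟨σ', hσ', fun ρ _ => rfl⟩

theorem xiChain_congr_of_eq_of_not_vanishing {u v : V} (hne : u ≠ v)
    {f g : Finset V → ZMod 2} (hfg : ∀ ρ, ¬ (u ∈ ρ ∧ v ∈ ρ) → f ρ = g ρ) :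
    xiChain u v f = xiChain u v g := by
  funext σ'
  refine Finset.sum_congr rfl fun σ hσ => hfg σ fun ⟨hu, hv⟩ => ?_
  obtain ⟨hxi, hcard⟩ := (Finset.mem_filter.1 hσ).2
  exact (card_xi_lt hne hu hv).ne (hxi ▸ hcard.symm)

theorem xiChain_single (u v : V) (σ₀ σ' : Finset V) :
    xiChain u v (fun ρ => if ρ = σ₀ then 1 else 0) σ' =
      if xi u v σ₀ = σ' ∧ σ₀.card = σ'.card then 1 else 0 := by
  simp [xiChain, Finset.sum_ite_eq']

theorem xiChain_psiSimp {u v : V} (hne : u ≠ v) (K : Finset (Finset V))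
    (prec : Finset V → Finset V → Prop) {σ' : Finset V} (hv : v ∉ σ') :
    xiChain u v (psiSimp K u v prec σ') = fun ρ' => if ρ' = σ' then 1 else 0 := by
  obtain ⟨σ₀, hσ₀, hpsi⟩ := exists_psiSimp_eq_single K u v prec σ'
  have hlift : xi u v σ₀ = σ' ∧ σ₀.card = σ'.card := by
    rcases Finset.mem_insert.1 hσ₀ with rfl | hσ₀
    · exact ⟨xi_eq_self_of_notMem u hv, rfl⟩
    · rw [Finset.mem_singleton.1 hσ₀]
      exact ⟨xi_mir_eq_self hv, card_mir u v σ'⟩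
  rw [xiChain_congr_of_eq_of_not_vanishing hne hpsi]
  funext ρ'
  rw [xiChain_single]
  by_cases hρ' : ρ' = σ'
  · simp [hρ', hlift]
  · rw [if_neg hρ', if_neg fun h => hρ' (h.1.symm.trans hlift.1)]

theorem xiChain_psiChain_apply (K : Finset (Finset V)) (u v : V)
    (prec : Finset V → Finset V → Prop) (c : Finset V → ZMod 2) (ρ' : Finset V) :
    xiChain u v (psiChain K u v prec c) ρ' =
      ∑ σ', c σ' * xiChain u v (psiSimp K u v prec σ') ρ' := by
  simp only [xiChain, psiChain]
  rw [Finset.sum_comm]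
  simp only [Finset.mul_sum]

theorem xiChain_psiChain_eq_inclusion_general
    (K : Finset (Finset V)) (h : Finset V → ℝ) (u v : V)
    (prec : Finset V → Finset V → Prop) (p : ℕ) (a : ℝ)
    (hne : u ≠ v)
    (c : Finset V → ZMod 2)
    (hc : IsChainOf (contract u v (sublevel K h a)) p c) :
    xiChain u v (psiChain K u v prec c) = c := by
  funext ρ'
  have hterm : ∀ σ', c σ' * xiChain u v (psiSimp K u v prec σ') ρ' =
      if ρ' = σ' then c σ' else 0 := by
    intro σ'
    by_cases hc0 : c σ' = 0
    · simp [hc0]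
    · rw [xiChain_psiSimp hne K prec (notMem_of_mem_contract hne (hc σ' hc0).1)]
      simp
  simp only [xiChain_psiChain_apply, hterm, Finset.sum_ite_eq, Finset.mem_univ, if_true]

/-- if `{u,v}` satisfies the link condition and is `(p,ε)`-admissible, then
for every `p`-chain `c` of `K'_a = ξ(K_a)` we have `ξ_#(ψ(c)) = c` (as `p`-chains of
`K'_b`, `b = a + ε`); i.e. the composite `ξ_# ∘ ψ` is the inclusion of chains of `K'_a`
into chains of `K'_b`. -/
theorem xiChain_psiChain_eq_inclusion
    (K : Finset (Finset V)) (h : Finset V → ℝ) (u v : V)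
    (prec : Finset V → Finset V → Prop) (p : ℕ) (ε a b : ℝ)
    (hK : IsComplex K) (hh : IsHeight K h)
    (huv : ({u, v} : Finset V) ∈ K) (hne : u ≠ v)
    (hprec : PrecOK K h prec) (huvprec : prec {u} {v})
    (hlink : LinkCond K u v) (hε : 0 < ε)
    (hadm : PAdmissible K h u v prec p ε) (hb : b = a + ε)
    (c : Finset V → ZMod 2)
    (hc : IsChainOf (contract u v (sublevel K h a)) p c) :
    xiChain u v (psiChain K u v prec c) = c :=
  xiChain_psiChain_eq_inclusion_general K h u v prec p a hne c hc
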